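/- Let s be an infinite 7/5⁺-power-free word over {a,b,c,d} and suppose g(s) contains a factor pq with period |p| and exponent |pq|/|p| ≥ 7/4, where |p| ≤ |q|. If the square pp is parsed as pp = (u₁ g(s') v₁)(u₁ g(s') v₁) with v₁u₁ = g(α) for some letter α and s' nonempty, then s'αs' is a factor of s, and since s is 7/5⁺-free, |u₁| ≤ 60 and |v₁| ≤ 53, contradicting |v₁u₁| = 160. Hence no such repetition with |p| ≤ |q| and s' nonempty exists in g(s). -/

import Mathlib

def HasPeriod {A : Type*} (w : List A) (p : ℕ) : Prop :=
  1 ≤ p ∧ ∀ i, i + p < w.length → w[i]? = w[i + p]?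

noncomputable def period {A : Type*} (w : List A) : ℕ :=
  sInf {p | HasPeriod w p}

noncomputable def exponent {A : Type*} (w : List A) : ℚ :=
  (w.length : ℚ) / (period w : ℚ)

/-- `w` is a finite factor of the infinite word `f`. -/
def FactorOf {A : Type*} (w : List A) (f : ℕ → A) : Prop :=
  ∃ i, w = (List.range w.length).map (fun k => f (i + k))

def ga : List (Fin 3) := [0,1,0,2,1,0,1,2,0,2,1,0,2,0,1,0,2,1,0,1,2,1,0,2,0,1,2,0,2,1,0,1,2,0,1,0,2,1,2,0,1,2,1,0,2,0,1,2,0,2,1,0,1,2,1,0,2,0,2,1,2,0,1,2,1,0,2,0,1,2,0,2,1,0,1,2,1,0,2,0,1,0,2,1,0,1,2,0,2,1,0,2,0,1,2,1,0,2,1,2,0,1,0,2,1,0,1,0,1,2,1,0,2,1,2,0,1,0,2,1,0,1,2,1,0,2,0,1,2,0,2,1,0,1,2,0,1,0,2,1,2,0,1,2,1,0,2,0,1,0,2,1,0,1,2,1,0,2,1,2]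
def gb : List (Fin 3) := [0,1,0,2,1,0,1,2,0,2,1,0,2,0,1,0,2,1,0,1,2,1,0,2,0,1,2,0,2,1,0,1,2,0,1,0,2,1,2,0,1,2,1,0,2,0,1,2,0,2,1,0,1,2,1,0,2,2,1,0,2,1,2,0,1,0,2,1,0,1,2,1,0,2,0,1,0,2,1,2,0,1,2,1,0,2,0,1,2,0,2,1,0,1,2,1,0,2,0,1,0,2,1,0,1,2,0,0,1,2,1,0,2,1,2,0,1,0,2,1,0,1,2,1,0,2,0,1,2,0,2,1,0,1,2,0,1,0,2,1,2,0,1,2,1,0,2,0,1,0,2,1,0,1,2,1,0,2,1,2]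
def gc : List (Fin 3) := [0,1,0,2,1,0,1,2,0,2,1,0,2,0,1,0,2,1,0,1,2,1,0,2,0,1,2,0,2,1,0,1,2,0,1,0,2,1,2,0,1,2,1,0,2,0,1,0,2,1,0,1,2,0,2,1,0,2,0,1,0,1,0,2,1,0,1,2,0,2,1,0,2,0,1,2,1,0,2,1,2,0,1,0,2,1,0,1,2,1,0,2,0,1,0,2,1,2,0,1,2,1,0,2,0,1,2,0,2,1,2,1,0,2,0,1,0,2,1,2,0,1,2,1,0,2,0,1,2,0,2,1,0,1,2,0,1,0,2,1,2,0,1,2,1,0,2,0,1,0,2,1,0,1,2,1,0,2,1,2]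
def gd : List (Fin 3) := [0,1,0,2,1,0,1,2,0,2,1,0,2,0,1,0,2,1,0,1,2,1,0,2,0,1,2,0,2,1,0,1,2,0,1,0,2,1,2,0,1,2,1,0,2,0,1,0,2,1,0,1,2,0,2,1,0,2,0,1,1,2,0,1,0,2,1,0,1,2,1,0,2,0,1,0,2,1,2,0,1,2,1,0,2,0,1,2,0,2,1,0,1,2,1,0,2,0,1,0,2,1,0,1,2,0,2,1,0,2,2,1,0,2,0,1,0,2,1,2,0,1,2,1,0,2,0,1,2,0,2,1,0,1,2,0,1,0,2,1,2,0,1,2,1,0,2,0,1,0,2,1,0,1,2,1,0,2,1,2]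

def g : Fin 4 → List (Fin 3) := ![ga, gb, gc, gd]

noncomputable def gInf (s : ℕ → Fin 4) (n : ℕ) : Fin 3 :=
  (g (s (n / 160))).getD (n % 160) 0

/-!
Parse `p = u₁ g(s') v₁` with `|v₁ u₁| = 160`: then `|p| = 160 (k + 1)` for `k = |s'| ≥ 1`, so `pq`
has a period that is a multiple of the codeword length and length at least `2 |p|`. Because
the period is a whole number of codewords, every codeword block lying inside `pq` is repeated
`k + 1` blocks later, and injectivity of `g` lifts this to `s`: the `2k + 1` letters of `s`
whose images start after the first block boundary in `pq` form a word of period `k + 1`,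
whose exponent `(2k + 1)/(k + 1) ≥ 3/2` exceeds `7/5`.
-/

section Periodicity

variable {A : Type*}

lemma hasPeriod_length {w : List A} (hw : w ≠ []) : HasPeriod w w.length :=
  ⟨List.length_pos_iff.mpr hw, fun _ h => absurd h (by omega)⟩

lemma hasPeriod_period {w : List A} (hw : w ≠ []) : HasPeriod w (period w) :=
  Nat.sInf_mem (s := {p | HasPeriod w p}) ⟨_, hasPeriod_length hw⟩

lemma HasPeriod.period_le {w : List A} {p : ℕ} (h : HasPeriod w p) : period w ≤ p :=
  Nat.sInf_le h

lemma HasPeriod.div_le_exponent {w : List A} {p : ℕ} (hw : w ≠ []) (h : HasPeriod w p) :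
    (w.length : ℚ) / p ≤ exponent w := by
  have hpos : (0 : ℚ) < period w := by exact_mod_cast (hasPeriod_period hw).1
  exact div_le_div_of_nonneg_left (by positivity) hpos (by exact_mod_cast h.period_le)

lemma HasPeriod.three_halves_le_exponent {w : List A} {d : ℕ} (hd : 2 ≤ d)
    (hlen : w.length = 2 * d - 1) (h : HasPeriod w d) : 3 / 2 ≤ exponent w := by
  have hw : w ≠ [] := List.ne_nil_of_length_pos (by omega)
  refine le_trans ?_ (h.div_le_exponent hw)
  have hd' : (2 : ℚ) ≤ d := by exact_mod_cast hd
  rw [hlen, Nat.cast_sub (by omega), le_div_iff₀ (by positivity)]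
  push_cast
  linarith

lemma getElem?_map_range_add (f : ℕ → A) {i n j : ℕ} (h : j < n) :
    ((List.range n).map fun k => f (i + k))[j]? = some (f (i + j)) := by
  rw [List.getElem?_map, List.getElem?_range h]; rfl

lemma HasPeriod.apply_add_eq {f : ℕ → A} {i n p : ℕ}
    (h : HasPeriod ((List.range n).map fun k => f (i + k)) p) {j : ℕ} (hj : j + p < n) :
    f (i + j) = f (i + j + p) := by
  have := h.2 j (by simpa using hj)
  rwa [getElem?_map_range_add f (by omega), getElem?_map_range_add f hj, Option.some_inj,
    ← add_assoc] at this

end Periodicity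

section Morphism

set_option maxRecDepth 10000 in
lemma length_g : ∀ c : Fin 4, (g c).length = 160 := by decide

set_option maxRecDepth 10000 in
lemma g_injective : Function.Injective g := by decide

lemma length_flatten_map_g (w : List (Fin 4)) : (w.map g).flatten.length = 160 * w.length := by
  simp [List.length_flatten, List.map_map, Function.comp_def, length_g, mul_comm]

lemma gInf_block (s : ℕ → Fin 4) (m : ℕ) {r : ℕ} (hr : r < 160) :
    gInf s (160 * m + r) = (g (s m)).getD r 0 := by
  simp only [gInf]
  congr <;> omega

lemma eq_of_forall_gInf_block_eq {s : ℕ → Fin 4} {m m' : ℕ}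
    (h : ∀ r < 160, gInf s (160 * m + r) = gInf s (160 * m' + r)) : s m = s m' := by
  apply g_injective
  refine List.ext_getElem (by rw [length_g, length_g]) fun r hr hr' => ?_
  have hr160 : r < 160 := length_g _ ▸ hr
  simpa only [gInf_block s _ hr160, List.getD_eq_getElem _ _ hr, List.getD_eq_getElem _ _ hr']
    using h r hr160

lemma exists_factor_hasPeriod_of_gInf {s : ℕ → Fin 4} {w : List (Fin 3)} {d : ℕ}
    (hw : FactorOf w (gInf s)) (hper : HasPeriod w (160 * d)) (hlen : 2 * (160 * d) ≤ w.length) :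
    ∃ W : List (Fin 4), FactorOf W s ∧ W.length = 2 * d - 1 ∧ HasPeriod W d := by
  obtain ⟨i, hi⟩ := hw
  rw [hi] at hper
  have hd : 1 ≤ d := by have := hper.1; omega
  set N := i / 160
  have hblock : ∀ m, N + 1 ≤ m → m + 1 ≤ N + d → s m = s (m + d) := by
    intro m hm hm'
    refine eq_of_forall_gInf_block_eq fun r hr => ?_
    have := hper.apply_add_eq (j := 160 * m + r - i) (by omega)
    rwa [show i + (160 * m + r - i) = 160 * m + r by omega,
      show 160 * m + r + 160 * d = 160 * (m + d) + r by ring] at this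
  refine ⟨(List.range (2 * d - 1)).map fun t => s (N + 1 + t), ⟨N + 1, by simp⟩, by simp,
    ⟨hd, fun t ht => ?_⟩⟩
  simp only [List.length_map, List.length_range] at ht
  rw [getElem?_map_range_add s (by omega), getElem?_map_range_add s ht, ← add_assoc]
  exact congrArg some (hblock _ (by omega) (by omega))

end Morphism

theorem stmt8_general (s : ℕ → Fin 4)
    (hfree : ∀ w : List (Fin 4), w ≠ [] → FactorOf w s → exponent w ≤ 7/5)
    (p q : List (Fin 3)) (hpq : FactorOf (p ++ q) (gInf s))
    (hper : period (p ++ q) = p.length)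
    (hle : p.length ≤ q.length)
    (u₁ v₁ : List (Fin 3)) (s' : List (Fin 4)) (α : Fin 4)
    (hs' : s' ≠ [])
    (hparse : p = u₁ ++ (s'.map g).flatten ++ v₁)
    (hcode : v₁ ++ u₁ = g α) : False := by
  have hk : 1 ≤ s'.length := List.length_pos_iff.mpr hs'
  have hcodeLen : v₁.length + u₁.length = 160 := by
    simpa [length_g] using congrArg List.length hcode
  have hplen : p.length = 160 * (s'.length + 1) := by
    rw [hparse, List.length_append, List.length_append, length_flatten_map_g]
    omega
  have hpqNe : p ++ q ≠ [] := List.ne_nil_of_length_pos (by rw [List.length_append]; omega)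
  have hperiodic : HasPeriod (p ++ q) (160 * (s'.length + 1)) :=
    hplen ▸ hper ▸ hasPeriod_period hpqNe
  obtain ⟨W, hWfac, hWlen, hWper⟩ :=
    exists_factor_hasPeriod_of_gInf hpq hperiodic (by rw [List.length_append]; omega)
  have hWexp := hWper.three_halves_le_exponent (by omega) hWlen
  have hWne : W ≠ [] := List.ne_nil_of_length_pos (by omega)
  linarith [hfree W hWne hWfac]

theorem stmt8 (s : ℕ → Fin 4)
    (hfree : ∀ w : List (Fin 4), w ≠ [] → FactorOf w s → exponent w ≤ 7/5)
    (p q : List (Fin 3)) (hpq : FactorOf (p ++ q) (gInf s))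
    (hper : period (p ++ q) = p.length)
    (hexp : 7/4 ≤ exponent (p ++ q))
    (hle : p.length ≤ q.length)
    (u₁ v₁ : List (Fin 3)) (s' : List (Fin 4)) (α : Fin 4)
    (hs' : s' ≠ [])
    (hparse : p = u₁ ++ (s'.map g).flatten ++ v₁)
    (hcode : v₁ ++ u₁ = g α) : False :=
  stmt8_general s hfree p q hpq hper hle u₁ v₁ s' α hs' hparse hcode
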